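/- Let G be a graph without isolated vertices and let {G1, G2} be a stable separation of G, i.e., a pair of edge-disjoint subgraphs with G1 ∪ G2 = G, V(G1) \ V(G2) ≠ ∅, V(G2) \ V(G1) ≠ ∅, and V(G1) ∩ V(G2) a stable set. Then colouring all edges of G1 red and all edges of G2 blue yields a NAP-colouring of G. -/
import Mathlib


open scoped Classical

namespace NAC

variable {V : Type*}

/-- Number of edges of `G` in the list `l` whose colour under `c` is `b`. -/
noncomputable def cCount (G : SimpleGraph V) (c : G.edgeSet → Bool) (b : Bool)
    (l : List (Sym2 V)) : ℕ :=
  (l.filter fun e => decide (∃ h : e ∈ G.edgeSet, c ⟨e, h⟩ = b)).length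

/-- `c` is a NAC-colouring of `G`: it is surjective (both colours are used) and no
cycle of `G` contains exactly one edge of either colour. -/
def IsNAC (G : SimpleGraph V) (c : G.edgeSet → Bool) : Prop :=
  Function.Surjective c ∧
  ∀ ⦃u : V⦄ (w : G.Walk u u), w.IsCycle →
    cCount G c true w.edges ≠ 1 ∧ cCount G c false w.edges ≠ 1

/-- The number of NAC-colourings of `G`, divided by two. -/
noncomputable def nacNum (G : SimpleGraph V) : ℕ :=
  {c : G.edgeSet → Bool | IsNAC G c}.ncard / 2

end NAC

namespace NAC

/-- `c` is a NAP-colouring of `G`: it is surjective, every 3-cycle is monochromatic, and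
there is no path `(u₁,u₂,u₃,u₄)` of length 3 whose consecutive edges alternate in colour. -/
def IsNAP (G : SimpleGraph V) (c : G.edgeSet → Bool) : Prop :=
  Function.Surjective c ∧
  (∀ (u v w : V) (h1 : G.Adj u v) (h2 : G.Adj v w) (_ : G.Adj w u),
    c ⟨s(u, v), G.mem_edgeSet.mpr h1⟩ = c ⟨s(v, w), G.mem_edgeSet.mpr h2⟩) ∧
  (∀ (u1 u2 u3 u4 : V) (h1 : G.Adj u1 u2) (h2 : G.Adj u2 u3) (h3 : G.Adj u3 u4),
    u1 ≠ u3 → u2 ≠ u4 → u1 ≠ u4 →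
    ¬(c ⟨s(u1, u2), G.mem_edgeSet.mpr h1⟩ ≠ c ⟨s(u2, u3), G.mem_edgeSet.mpr h2⟩ ∧
      c ⟨s(u2, u3), G.mem_edgeSet.mpr h2⟩ ≠ c ⟨s(u3, u4), G.mem_edgeSet.mpr h3⟩))

end NAC

open NAC in
/-- Colouring the edges of one side of a stable separation red and the other side blue
yields a NAP-colouring. -/
theorem statement2 {V : Type*} (G : SimpleGraph V)
    (hnoiso : ∀ v : V, ∃ u, G.Adj v u)
    (H1 H2 : G.Subgraph)
    (hE1 : H1.verts = {x | ∃ y, H1.Adj x y}) (hE2 : H2.verts = {x | ∃ y, H2.Adj x y})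
    (hunion : H1.edgeSet ∪ H2.edgeSet = G.edgeSet)
    (hdisj : Disjoint H1.edgeSet H2.edgeSet)
    (hV1 : (H1.verts \ H2.verts).Nonempty) (hV2 : (H2.verts \ H1.verts).Nonempty)
    (hstable : ∀ u ∈ H1.verts ∩ H2.verts, ∀ v ∈ H1.verts ∩ H2.verts, ¬ G.Adj u v) :
    IsNAP G (fun e => decide ((e : Sym2 V) ∈ H1.edgeSet)) := by

  classical
  have key : ∀ {u v : V}, G.Adj u v → s(u,v) ∈ H1.edgeSet ∨ s(u,v) ∈ H2.edgeSet := by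
    intro u v h
    have hm : s(u,v) ∈ G.edgeSet := h
    rw [← hunion] at hm
    exact hm
  have hnot1 : ∀ {e : Sym2 V}, e ∈ H2.edgeSet → e ∉ H1.edgeSet := fun he =>
    Set.disjoint_right.mp hdisj he
  have hboth : ∀ {u v : V}, G.Adj u v → s(u,v) ∈ H1.edgeSet → s(u,v) ∈ H2.edgeSet → False :=
    fun h h1 h2 => hnot1 h2 h1
  refine ⟨?_, ?_, ?_⟩
  · intro b
    cases b with
    | false =>
      obtain ⟨x, hx2, hx1⟩ := hV2
      have : x ∈ {x | ∃ y, H2.Adj x y} := hE2 ▸ hx2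
      obtain ⟨y, hxy⟩ := this
      have hG : G.Adj x y := hxy.adj_sub
      refine ⟨⟨s(x,y), hG⟩, ?_⟩
      simp only [decide_eq_false_iff_not]
      exact hnot1 (SimpleGraph.Subgraph.mem_edgeSet.mpr hxy)
    | true =>
      obtain ⟨x, hx1, hx2⟩ := hV1
      have : x ∈ {x | ∃ y, H1.Adj x y} := hE1 ▸ hx1
      obtain ⟨y, hxy⟩ := this
      have hG : G.Adj x y := hxy.adj_sub
      refine ⟨⟨s(x,y), hG⟩, ?_⟩
      simp only [decide_eq_true_eq]
      exact SimpleGraph.Subgraph.mem_edgeSet.mpr hxy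
  · intro u v w h1 h2 h3
    simp only [decide_eq_decide]
    constructor
    · intro e1
      rcases key h2 with e2 | e2
      · exact e2
      · -- e1 : uv ∈ H1, e2 : vw ∈ H2, so v ∈ both
        exfalso
        have hv : v ∈ H1.verts ∩ H2.verts :=
          ⟨(SimpleGraph.Subgraph.mem_edgeSet.mp e1).symm.fst_mem,
           (SimpleGraph.Subgraph.mem_edgeSet.mp e2).fst_mem⟩
        rcases key h3 with e3 | e3
        · have hw : w ∈ H1.verts ∩ H2.verts :=
            ⟨(SimpleGraph.Subgraph.mem_edgeSet.mp e3).fst_mem,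
             (SimpleGraph.Subgraph.mem_edgeSet.mp e2).symm.fst_mem⟩
          exact hstable v hv w hw h2
        · have hu : u ∈ H1.verts ∩ H2.verts :=
            ⟨(SimpleGraph.Subgraph.mem_edgeSet.mp e1).fst_mem,
             (SimpleGraph.Subgraph.mem_edgeSet.mp e3).symm.fst_mem⟩
          exact hstable u hu v hv h1
    · intro e2
      rcases key h1 with e1 | e1
      · exact e1
      · exfalso
        have hv : v ∈ H1.verts ∩ H2.verts :=
          ⟨(SimpleGraph.Subgraph.mem_edgeSet.mp e2).fst_mem,
           (SimpleGraph.Subgraph.mem_edgeSet.mp e1).symm.fst_mem⟩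
        rcases key h3 with e3 | e3
        · exfalso
          have hu : u ∈ H1.verts ∩ H2.verts :=
            ⟨(SimpleGraph.Subgraph.mem_edgeSet.mp e3).symm.fst_mem,
             (SimpleGraph.Subgraph.mem_edgeSet.mp e1).fst_mem⟩
          exact hstable u hu v hv h1
        · have hw : w ∈ H1.verts ∩ H2.verts :=
            ⟨(SimpleGraph.Subgraph.mem_edgeSet.mp e2).symm.fst_mem,
             (SimpleGraph.Subgraph.mem_edgeSet.mp e3).fst_mem⟩
          exact absurd h2 (hstable v hv w hw)
  · intro u1 u2 u3 u4 h1 h2 h3 _ _ _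
    rintro ⟨ne12, ne23⟩
    simp only [ne_eq, decide_eq_decide] at ne12 ne23
    rcases key h2 with e2 | e2
    · have e1 : s(u1,u2) ∉ H1.edgeSet := fun h => ne12 (iff_of_true h e2)
      have e3 : s(u3,u4) ∉ H1.edgeSet := fun h => ne23 (iff_of_true e2 h)
      have e1' : s(u1,u2) ∈ H2.edgeSet := (key h1).resolve_left e1
      have e3' : s(u3,u4) ∈ H2.edgeSet := (key h3).resolve_left e3
      have hv : u2 ∈ H1.verts ∩ H2.verts :=
        ⟨(SimpleGraph.Subgraph.mem_edgeSet.mp e2).fst_mem,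
         (SimpleGraph.Subgraph.mem_edgeSet.mp e1').symm.fst_mem⟩
      have hw : u3 ∈ H1.verts ∩ H2.verts :=
        ⟨(SimpleGraph.Subgraph.mem_edgeSet.mp e2).symm.fst_mem,
         (SimpleGraph.Subgraph.mem_edgeSet.mp e3').fst_mem⟩
      exact hstable u2 hv u3 hw h2
    · have e2' : s(u2,u3) ∉ H1.edgeSet := hnot1 e2
      have e1 : s(u1,u2) ∈ H1.edgeSet := by
        by_contra h; exact ne12 (iff_of_false h e2')
      have e3 : s(u3,u4) ∈ H1.edgeSet := by
        by_contra h; exact ne23 (iff_of_false e2' h)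
      have hv : u2 ∈ H1.verts ∩ H2.verts :=
        ⟨(SimpleGraph.Subgraph.mem_edgeSet.mp e1).symm.fst_mem,
         (SimpleGraph.Subgraph.mem_edgeSet.mp e2).fst_mem⟩
      have hw : u3 ∈ H1.verts ∩ H2.verts :=
        ⟨(SimpleGraph.Subgraph.mem_edgeSet.mp e3).fst_mem,
         (SimpleGraph.Subgraph.mem_edgeSet.mp e2).symm.fst_mem⟩
      exact hstable u2 hv u3 hw h2
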